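/- Soundness of the executable stack allocation: for every byte list b⃗ and configuration σ, either alloca b⃗ σ ∋ UB, or alloca b⃗ σ ∋ alloca^run b⃗ σ; in particular the executable allocator's choice of fresh provenance (by incrementing a counter) and contiguous free block (one past the largest currently allocated address) is an allowed behavior of the nondeterministic allocation specification. -/

import Mathlib

/-! Executable memory model (instantiated at the concrete address type ℤ)
and its nondeterministic specification. -/

/-- Pointers: an address tagged with a provenance (`Option ℕ`, `none` is the wildcard). -/
structure PtrZ where
  a : ℤ
  pr : Option ℕ
deriving DecidableEq

/-- Memory configurations: a finite memory map, heap block map, frame stack, and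
the set of used provenances. -/
structure ConfZ (SByte : Type) where
  mem : Finmap fun _ : ℤ => SByte × Option ℕ
  heap : Finmap fun _ : ℤ => List PtrZ
  stack : List (List PtrZ)
  used : Finset ℕ

/-- Possible outcomes of a memory operation. -/
inductive ErrUbOom (A : Type) where
  | UB
  | OOM
  | FAIL
  | ok (a : A)

/-- The (nondeterministic, propositional) specification monad. -/
abbrev MemPropT (SByte X : Type) : Type :=
  ConfZ SByte → Set (ErrUbOom (ConfZ SByte × X))

/-- The (deterministic) executable monad. -/
abbrev MemExec (SByte X : Type) : Type :=
  ConfZ SByte → ErrUbOom (ConfZ SByte × X)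

/-- `σ.mem[p] ≐ b`: address `p.a` maps to byte `b` with provenance `p.pr`. -/
def readByteAt {SByte : Type} (σ : ConfZ SByte) (p : PtrZ) (b : SByte) : Prop :=
  σ.mem.lookup p.a = some (b, p.pr)

/-- A pointer is accessible in memory. -/
def accessible {SByte : Type} (σ : ConfZ SByte) (p : PtrZ) : Prop :=
  ∃ b, readByteAt σ p b

/-- Boolean accessibility check (used by the executable implementations). -/
def accessibleB {SByte : Type} (σ : ConfZ SByte) (p : PtrZ) : Bool :=
  match σ.mem.lookup p.a with
  | some (_, pr) => decide (pr = p.pr)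
  | none => false

/-- The two memories agree on content and provenance at all addresses except those
of the pointers in `ps`. -/
def memEqExcept {SByte : Type} (σ1 σ2 : ConfZ SByte) (ps : List PtrZ) : Prop :=
  ∀ (p' : PtrZ) (b : SByte),
    (∀ p ∈ ps, p'.a ≠ p.a) → (readByteAt σ1 p' b ↔ readByteAt σ2 p' b)


/-- Add a list of freshly allocated pointers to the top frame of the stack. -/
def pushTop (ps : List PtrZ) : List (List PtrZ) → List (List PtrZ)
  | [] => [ps]
  | f :: rest => (ps ++ f) :: rest

/-- Write a list of bytes with provenance `pr` at consecutive addresses starting at `a`. -/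
def writeBytes {SByte : Type} (m : Finmap fun _ : ℤ => SByte × Option ℕ) (a : ℤ)
    (pr : Option ℕ) : List SByte → Finmap fun _ : ℤ => SByte × Option ℕ
  | [] => m
  | b :: bs => writeBytes (m.insert a (b, pr)) (a + 1) pr bs

/-- A fresh provenance, generated by a counter (one past the largest used provenance). -/
def freshProv {SByte : Type} (σ : ConfZ SByte) : ℕ := σ.used.sup id + 1

/-- A free address: one past the largest currently allocated address. -/
def freshAddr {SByte : Type} (σ : ConfZ SByte) : ℤ := WithBot.unbotD 0 σ.mem.keys.max + 1

/-- The pointers of a freshly allocated block of length `n` rooted at `a`. -/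
def blockPtrs (a : ℤ) (pr : ℕ) (n : ℕ) : List PtrZ :=
  (List.range n).map fun i => ⟨a + i, some pr⟩

/-- Specification of stack allocation `alloca b⃗`: choose a fresh provenance `pr` and a
free contiguous range of `|b⃗|` addresses starting at `a`, write the bytes there with
provenance `pr`, add the new pointers to the top stack frame, leave everything else
unchanged, record `pr` as used, and return the pointer `(a, pr)`
(`OOM` is always allowed). -/
def allocaSpec {SByte : Type} (bs : List SByte) : MemPropT SByte PtrZ :=
  fun σ1 =>
    { beh | beh = .OOM
          ∨ ∃ (σ2 : ConfZ SByte) (pr : ℕ) (a : ℤ) (ps : List PtrZ),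
              pr ∉ σ1.used ∧
              ps.length = bs.length ∧
              (∀ i (h : i < ps.length),
                (ps.get ⟨i, h⟩).pr = some pr ∧ (ps.get ⟨i, h⟩).a = a + i ∧
                σ1.mem.lookup (ps.get ⟨i, h⟩).a = none) ∧
              (∀ i (h : i < ps.length) (h' : i < bs.length),
                readByteAt σ2 (ps.get ⟨i, h⟩) (bs.get ⟨i, h'⟩)) ∧
              memEqExcept σ1 σ2 ps ∧
              σ2.heap = σ1.heap ∧
              σ2.stack = pushTop ps σ1.stack ∧
              σ2.used = insert pr σ1.used ∧
              beh = .ok (σ2, ⟨a, some pr⟩) }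

/-- Executable stack allocation: deterministically picks the fresh provenance by
counter and the free contiguous block just past the largest allocated address. -/
def allocaRun {SByte : Type} (bs : List SByte) : MemExec SByte PtrZ :=
  fun σ =>
    let pr := freshProv σ
    let a := freshAddr σ
    .ok ({ mem := writeBytes σ.mem a (some pr) bs,
           heap := σ.heap,
           stack := pushTop (blockPtrs a pr bs.length) σ.stack,
           used := insert pr σ.used }, ⟨a, some pr⟩)

lemma coeList (n : ℕ) :
    (do let a ← List.range n; pure ((a : ℤ))) = (List.range n).map (Nat.cast) := by
  show (List.range n).flatMap (fun a : ℕ => [(a : ℤ)]) = _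
  induction List.range n with
  | nil => rfl
  | cons x l ih => simp [List.flatMap_cons, ih]

lemma writeBytes_lookup_of_ne {SByte : Type}
    (bs : List SByte) (m : Finmap fun _ : ℤ => SByte × Option ℕ) (a : ℤ)
    (pr : Option ℕ) (x : ℤ) (h : ∀ i : ℕ, i < bs.length → x ≠ a + i) :
    (writeBytes m a pr bs).lookup x = m.lookup x := by
  induction bs generalizing m a with
  | nil => rfl
  | cons b bs ih =>
      have hx0 : x ≠ a := by simpa using h 0 (by simp)
      have step : (writeBytes (m.insert a (b, pr)) (a + 1) pr bs).lookup x
          = (m.insert a (b, pr)).lookup x := by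
        apply ih
        intro i hi hx
        have := h (i + 1) (by simpa using Nat.succ_lt_succ hi)
        apply this
        push_cast
        rw [hx]; ring
      show (writeBytes (m.insert a (b, pr)) (a + 1) pr bs).lookup x = _
      rw [step, Finmap.lookup_insert_of_ne _ hx0]

lemma writeBytes_lookup_get {SByte : Type}
    (bs : List SByte) (m : Finmap fun _ : ℤ => SByte × Option ℕ) (a : ℤ)
    (pr : Option ℕ) (i : ℕ) (h : i < bs.length) :
    (writeBytes m a pr bs).lookup (a + i) = some (bs.get ⟨i, h⟩, pr) := by
  induction bs generalizing m a i with
  | nil => simp at h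
  | cons b bs ih =>
      show (writeBytes (m.insert a (b, pr)) (a + 1) pr bs).lookup (a + i) = _
      cases i with
      | zero =>
          rw [writeBytes_lookup_of_ne]
          · have h0 : a + ((0:ℕ):ℤ) = a := by simp
            rw [h0, Finmap.lookup_insert]; rfl
          · intro j hj hx
            have : (0 : ℤ) < 1 + j := by positivity
            omega
      | succ i =>
          have hi : i < bs.length := by simpa using Nat.lt_of_succ_lt_succ h
          have := ih (m.insert a (b, pr)) (a + 1) i hi
          have harith : a + ((i : ℤ) + 1) = a + 1 + i := by ring
          push_cast
          rw [harith, this]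
          simp

/-- Soundness of the executable stack allocation: for every byte list `b⃗` and
configuration `σ`, either `alloca b⃗ σ ∋ UB`, or `alloca b⃗ σ ∋ alloca^run b⃗ σ`. -/
theorem allocaRun_sound {SByte : Type} (bs : List SByte) (σ : ConfZ SByte) :
    ErrUbOom.UB ∈ allocaSpec bs σ ∨ allocaRun bs σ ∈ allocaSpec bs σ := by
  right
  set pr := freshProv σ with hpr
  set a := freshAddr σ with ha
  set ps := blockPtrs a pr bs.length with hps
  have hfresh : ∀ x : ℤ, a ≤ x → σ.mem.lookup x = none := by
    intro x hx
    rw [Finmap.lookup_eq_none]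
    intro hmem
    rw [← Finmap.mem_keys] at hmem
    have hle : (x : WithBot ℤ) ≤ σ.mem.keys.max := Finset.le_max hmem
    cases hmax : σ.mem.keys.max with
    | bot => rw [hmax] at hle; exact absurd hle (by simp)
    | coe m =>
        rw [hmax] at hle
        have hxm : x ≤ m := by exact_mod_cast hle
        have : a = m + 1 := by rw [ha]; unfold freshAddr; rw [hmax]; rfl
        omega
  have hpslen : ps.length = bs.length := by
    simp only [hps, blockPtrs, coeList, List.length_map, List.length_range]
  have hget : ∀ i (h : i < ps.length), ps.get ⟨i, h⟩ = ⟨a + i, some pr⟩ := by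
    intro i h
    simp only [hps, blockPtrs, coeList, List.get_eq_getElem, List.getElem_map,
      List.getElem_range]
  refine Or.inr ⟨{ mem := writeBytes σ.mem a (some pr) bs,
                   heap := σ.heap,
                   stack := pushTop ps σ.stack,
                   used := insert pr σ.used },
    pr, a, ps, ?_, hpslen, ?_, ?_, ?_, rfl, rfl, rfl, rfl⟩
  · intro hmem
    have := Finset.le_sup (f := id) hmem
    simp only [id] at this
    rw [hpr] at this
    unfold freshProv at this
    omega
  · intro i h
    rw [hget i h]
    exact ⟨rfl, rfl, hfresh (a + (i : ℤ)) (by omega)⟩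
  · intro i h h'
    rw [hget i h]
    show (writeBytes σ.mem a (some pr) bs).lookup (a + (i : ℤ))
      = some (bs.get ⟨i, h'⟩, some pr)
    exact writeBytes_lookup_get bs σ.mem a (some pr) i h'
  · intro p' b hp'
    unfold readByteAt
    show σ.mem.lookup p'.a = some (b, p'.pr)
      ↔ (writeBytes σ.mem a (some pr) bs).lookup p'.a = some (b, p'.pr)
    rw [writeBytes_lookup_of_ne]
    intro i hi
    refine hp' ⟨a + i, some pr⟩ ?_
    simp only [hps, blockPtrs, coeList, List.mem_map, List.mem_range]
    exact ⟨i, ⟨i, hi, rfl⟩, rfl⟩
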